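/- An ideal Q of R_a is primary if and only if there exist a basic irreducible divisor h of X^n − 1 over ZMod p^a and an integer i with 1 ≤ i ≤ a such that Q is the ideal of R_a generated by h̄ and the image of the constant polynomial p^i. (Since p^a = 0 in ZMod p^a, the case i = a gives the principal ideal generated by h̄.) -/

import Mathlib

/-!
Let `φ : R → K` be a surjection onto a field whose kernel is generated by a nilpotent `t`
(here `ZMod (p ^ a) → ZMod p`, `t = p`), and `f ∈ R[X]` monic with separable reduction
(here `X ^ n - 1`, separable as `p ∤ n`). For a primary `I ∋ f`, the radical is the preimage of
`(g)` for a monic irreducible factor `g` of `f mod t`. Separability makes `f ≡ g * k₀` a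
coprime factorisation, which Hensel lifting turns into `f = h * k` with `h` monic. Since `k` lies
outside the radical, `h ∈ I`, and then `I = (h, t ^ i)` for the least `i` with `t ^ i ∈ I`.
Conversely `(h, t ^ i)` has the maximal ideal `(h, t)` as radical, so it is primary.
-/

open Polynomial

/-- The quotient ring `(ZMod p^a)[X]/(X^n - 1)`. -/
abbrev Rquot (p a n : ℕ) :=
  Polynomial (ZMod (p ^ a)) ⧸ Ideal.span {(X : Polynomial (ZMod (p ^ a))) ^ n - 1}

/-- The natural quotient map `(ZMod p^a)[X] → (ZMod p^a)[X]/(X^n - 1)`. -/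
noncomputable abbrev rmk (p a n : ℕ) : Polynomial (ZMod (p ^ a)) →+* Rquot p a n :=
  Ideal.Quotient.mk _

/-- A basic irreducible divisor of `X^n - 1` over `ZMod p^a`: a monic divisor of `X^n - 1`
whose coefficientwise reduction modulo `p` is irreducible. -/
def BasicIrr (p a n : ℕ) [Fact p.Prime] (ha : a ≠ 0) (h : Polynomial (ZMod (p ^ a))) : Prop :=
  h.Monic ∧ h ∣ (X ^ n - 1) ∧
    Irreducible (h.map (ZMod.castHom (dvd_pow_self p ha) (ZMod p)))

open Ideal

theorem ZMod.ker_castHom {m n : ℕ} (h : m ∣ n) :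
    RingHom.ker (ZMod.castHom h (ZMod m)) = span {(m : ZMod n)} := by
  ext x
  obtain ⟨z, rfl⟩ := ZMod.intCast_surjective x
  rw [RingHom.mem_ker, map_intCast, ZMod.intCast_zmod_eq_zero_iff_dvd, mem_span_singleton]
  constructor
  · rintro ⟨c, rfl⟩
    exact ⟨c, by push_cast; rfl⟩
  · rintro ⟨c, hc⟩
    obtain ⟨c, rfl⟩ := ZMod.intCast_surjective c
    rw [← Int.cast_natCast, ← Int.cast_mul, ZMod.intCast_eq_intCast_iff_dvd_sub] at hc
    have := dvd_sub (dvd_mul_right (m : ℤ) c) ((Int.natCast_dvd_natCast.mpr h).trans hc)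
    rwa [sub_sub_cancel] at this

theorem Ideal.IsPrimary.of_comap_of_surjective {A B : Type*} [CommRing A] [CommRing B]
    {f : A →+* B} (hf : Function.Surjective f) {Q : Ideal B} (hQ : (Q.comap f).IsPrimary) :
    Q.IsPrimary := by
  rw [isPrimary_iff] at hQ ⊢
  refine ⟨fun htop ↦ hQ.1 (by rw [htop, comap_top]), fun {x y} hxy ↦ ?_⟩
  obtain ⟨x, rfl⟩ := hf x
  obtain ⟨y, rfl⟩ := hf y
  rw [← map_mul, ← mem_comap] at hxy
  refine (hQ.2 hxy).imp id fun hy ↦ ?_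
  rwa [← comap_radical, mem_comap] at hy

theorem Ideal.IsPrimary.eq_span_pair_pow {A : Type*} [CommRing A] {I : Ideal A}
    (hI : I.IsPrimary) {x s : A} (hx : x ∈ I) (hrad : I.radical ≤ span {x, s}) {a : ℕ}
    (hsa : s ^ a ∈ I) : ∃ i, 1 ≤ i ∧ i ≤ a ∧ I = span {x, s ^ i} := by
  classical
  have hex : ∃ j, s ^ j ∈ I := ⟨a, hsa⟩
  set i := Nat.find hex
  have hi1 : 1 ≤ i := Nat.one_le_iff_ne_zero.mpr fun h0 ↦ by
    have h1 := Nat.find_spec hex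
    rw [show Nat.find hex = 0 from h0, pow_zero] at h1
    exact hI.ne_top ((eq_top_iff_one I).mpr h1)
  refine ⟨i, hi1, Nat.find_min' hex hsa, le_antisymm ?_ ?_⟩
  · suffices ∀ j ≤ i, I ≤ span {x, s ^ j} from this i le_rfl
    intro j
    induction j with
    | zero => exact fun _ z _ ↦ mem_span_pair.mpr ⟨0, z, by simp⟩
    | succ j ih =>
      intro hj z hz
      obtain ⟨w, c, rfl⟩ := mem_span_pair.mp (ih (by omega) hz)
      -- if `c ∉ span {x, s}`, then `c` is outside the radical and primality forces `s ^ j ∈ I`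
      by_cases hc : c ∈ span {x, s}
      · obtain ⟨w', c', rfl⟩ := mem_span_pair.mp hc
        exact mem_span_pair.mpr ⟨w + w' * s ^ j, c', by ring⟩
      · have hsj : s ^ j * c ∈ I := by
          have := I.sub_mem hz (I.mul_mem_left w hx)
          rwa [add_sub_cancel_left, mul_comm] at this
        have := ((isPrimary_iff.mp hI).2 hsj).resolve_right fun h ↦ hc (hrad h)
        exact absurd this (Nat.find_min hex (by omega))
  · rw [span_le, Set.insert_subset_iff, Set.singleton_subset_iff]
    exact ⟨hx, Nat.find_spec hex⟩

namespace Polynomial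

theorem exists_C_mul_eq_C_mul_of_degree_lt {R : Type*} [CommRing R] (x : R) (e : R[X]) {N : ℕ}
    (hd : (C x * e).degree < N) : ∃ e' : R[X], C x * e' = C x * e ∧ e'.degree < N := by
  refine ⟨PowerSeries.trunc N e, ?_, PowerSeries.degree_trunc_lt _ _⟩
  ext j
  rw [coeff_C_mul, coeff_C_mul, PowerSeries.coeff_trunc, coeff_coe]
  split_ifs with hj
  · rfl
  · rw [mul_zero, ← coeff_C_mul,
      coeff_eq_zero_of_degree_lt (hd.trans_le (by exact_mod_cast not_lt.mp hj))]

theorem exists_mul_add_mul_eq_of_isCoprime {S : Type*} [CommRing S] [Nontrivial S]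
    {g k e : S[X]} (hg : g.Monic) (hk : k.Monic) (hco : IsCoprime g k)
    (he : e.degree < (g * k).degree) :
    ∃ u r : S[X], u * g + r * k = e ∧ r.degree < g.degree ∧ u.degree < k.degree := by
  obtain ⟨A, B, hAB⟩ := hco
  have hdiv := modByMonic_add_div (e * B) g
  refine ⟨e * A + (e * B /ₘ g) * k, e * B %ₘ g, by linear_combination k * hdiv + e * hAB,
    degree_modByMonic_lt _ hg, ?_⟩
  have hrk : (e * B %ₘ g * k).degree < (g * k).degree := by
    rw [hk.degree_mul, hk.degree_mul]
    exact WithBot.add_lt_add_right (by simpa using hk.ne_zero) (degree_modByMonic_lt _ hg)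
  have hug : ((e * A + (e * B /ₘ g) * k) * g).degree < (k * g).degree := by
    rw [mul_comm k g, show (e * A + (e * B /ₘ g) * k) * g = e - e * B %ₘ g * k by
      linear_combination k * hdiv + e * hAB]
    exact (degree_sub_le _ _).trans_lt (max_lt he hrk)
  rw [hg.degree_mul, hg.degree_mul] at hug
  exact lt_of_add_lt_add_right hug

section Hensel

variable {R S : Type*} [CommRing R] [CommRing S] {φ : R →+* S} {t : R}

theorem ker_mapRingHom_eq_span_C (hker : RingHom.ker φ = span {t}) :
    RingHom.ker (mapRingHom φ) = span {C t} := by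
  rw [ker_mapRingHom, hker, Ideal.map_span, Set.image_singleton]

theorem map_eq_zero_iff_C_dvd (hker : RingHom.ker φ = span {t}) {q : R[X]} :
    q.map φ = 0 ↔ C t ∣ q := by
  rw [← mem_span_singleton, ← ker_mapRingHom_eq_span_C hker, RingHom.mem_ker, coe_mapRingHom]

theorem comap_span_map_eq_span_pair (hφ : Function.Surjective φ)
    (hker : RingHom.ker φ = span {t}) (h : R[X]) :
    comap (mapRingHom φ) (span {h.map φ}) = span {h, C t} := by
  rw [← coe_mapRingHom, ← Set.image_singleton, ← Ideal.map_span,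
    comap_map_of_surjective' _ (map_surjective φ hφ), ker_mapRingHom_eq_span_C hker,
    ← span_union, Set.singleton_union]

variable [Nontrivial S]

theorem Monic.degree_sub_lt_of_map_eq {f q : R[X]} (hf : f.Monic) (hq : q.Monic)
    (hmap : q.map φ = f.map φ) : (f - q).degree < f.natDegree := by
  have := φ.domain_nontrivial
  rw [← degree_eq_natDegree hf.ne_zero]
  refine degree_sub_lt_left ?_ hf.ne_zero (by rw [hf.leadingCoeff, hq.leadingCoeff])
  rw [← hq.degree_map φ, ← hf.degree_map φ, hmap]

/-- One Hensel step: the error `f - h * k = t ^ m * e` is split as `e ≡ u * g + r * k₀` using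
coprimality, and `h + t ^ m * r`, `k + t ^ m * u` reduce the error to order `t ^ (m + 1)`. -/
theorem exists_monic_lift_succ (hφ : Function.Surjective φ) (hker : RingHom.ker φ = span {t})
    {f h k : R[X]} {g k₀ : S[X]} (hf : f.Monic) (hh : h.Monic) (hk : k.Monic)
    (hhg : h.map φ = g) (hkk : k.map φ = k₀) (hco : IsCoprime g k₀) {m : ℕ} (hm : m ≠ 0)
    (hdvd : C (t ^ m) ∣ f - h * k) :
    ∃ h' k' : R[X], h'.Monic ∧ k'.Monic ∧ h'.map φ = g ∧ k'.map φ = k₀ ∧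
      C (t ^ (m + 1)) ∣ f - h' * k' := by
  have hφt : φ (t ^ m) = 0 := by
    rw [← RingHom.mem_ker, hker]
    exact pow_mem_of_mem _ (mem_span_singleton_self t) m (Nat.pos_of_ne_zero hm)
  have := φ.domain_nontrivial
  have hgm : g.Monic := hhg ▸ hh.map φ
  have hk₀m : k₀.Monic := hkk ▸ hk.map φ
  have hmap : (h * k).map φ = f.map φ := by
    rw [eq_comm, ← sub_eq_zero, ← Polynomial.map_sub, map_eq_zero_iff_C_dvd hker]
    exact (C_pow (a := t) (n := m) ▸ dvd_pow_self (C t) hm).trans hdvd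
  obtain ⟨e₀, he₀⟩ := hdvd
  obtain ⟨e, he, hedeg⟩ := exists_C_mul_eq_C_mul_of_degree_lt (t ^ m) e₀
    (he₀ ▸ hf.degree_sub_lt_of_map_eq (hh.mul hk) hmap)
  rw [← he] at he₀
  have hedeg' : (e.map φ).degree < (g * k₀).degree := by
    rw [← hhg, ← hkk, ← Polynomial.map_mul, hmap, hf.degree_map,
      degree_eq_natDegree hf.ne_zero]
    exact degree_map_le.trans_lt hedeg
  obtain ⟨u₀, r₀, hsplit, hr₀, hu₀⟩ :=
    exists_mul_add_mul_eq_of_isCoprime hgm hk₀m hco hedeg'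
  obtain ⟨r, rfl, hr⟩ := exists_degree_eq_of_mem_lifts (mem_lifts_of_surjective hφ r₀)
  obtain ⟨u, rfl, hu⟩ := exists_degree_eq_of_mem_lifts (mem_lifts_of_surjective hφ u₀)
  have hsmall (q : R[X]) : (C (t ^ m) * q).degree ≤ q.degree := by
    rw [← smul_eq_C_mul]
    exact degree_smul_le _ _
  have hmap_small (q : R[X]) : (C (t ^ m) * q).map φ = 0 := by
    rw [Polynomial.map_mul, map_C, hφt, C_0, zero_mul]
  refine ⟨h + C (t ^ m) * r, k + C (t ^ m) * u,
    hh.add_of_left ((hsmall r).trans_lt (by rw [hr, ← hh.degree_map φ, hhg]; exact hr₀)),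
    hk.add_of_left ((hsmall u).trans_lt (by rw [hu, ← hk.degree_map φ, hkk]; exact hu₀)),
    by rw [Polynomial.map_add, hmap_small, add_zero, hhg],
    by rw [Polynomial.map_add, hmap_small, add_zero, hkk], ?_⟩
  obtain ⟨s, hs⟩ : C t ∣ e - (r * k + u * h) - C (t ^ m) * (r * u) := by
    rw [← map_eq_zero_iff_C_dvd hker]
    simp only [Polynomial.map_sub, Polynomial.map_add, hmap_small, sub_zero, Polynomial.map_mul,
      hhg, hkk]
    linear_combination -hsplit
  exact ⟨s, by rw [pow_succ, C_mul, mul_assoc, ← hs]; linear_combination he₀⟩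

theorem exists_monic_lift_of_isCoprime (hφ : Function.Surjective φ)
    (hker : RingHom.ker φ = span {t}) (ht : IsNilpotent t) {f : R[X]} (hf : f.Monic)
    {g k₀ : S[X]} (hg : g.Monic) (hk₀ : k₀.Monic) (hfac : f.map φ = g * k₀)
    (hco : IsCoprime g k₀) :
    ∃ h k : R[X], h.Monic ∧ k.Monic ∧ h.map φ = g ∧ k.map φ = k₀ ∧ h * k = f := by
  have hlift : ∀ m, ∃ h k : R[X], h.Monic ∧ k.Monic ∧ h.map φ = g ∧ k.map φ = k₀ ∧
      C (t ^ (m + 1)) ∣ f - h * k := by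
    intro m
    induction m with
    | zero =>
      obtain ⟨h, hhg, -, hh⟩ := lifts_and_degree_eq_and_monic (mem_lifts_of_surjective hφ g) hg
      obtain ⟨k, hkk, -, hk⟩ :=
        lifts_and_degree_eq_and_monic (mem_lifts_of_surjective hφ k₀) hk₀
      refine ⟨h, k, hh, hk, hhg, hkk, ?_⟩
      rw [zero_add, pow_one, ← map_eq_zero_iff_C_dvd hker, Polynomial.map_sub,
        Polynomial.map_mul, hhg, hkk, hfac, sub_self]
    | succ m ih =>
      obtain ⟨h, k, hh, hk, hhg, hkk, hdvd⟩ := ih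
      exact exists_monic_lift_succ hφ hker hf hh hk hhg hkk hco m.succ_ne_zero hdvd
  obtain ⟨a, hta⟩ := ht
  obtain ⟨h, k, hh, hk, hhg, hkk, hdvd⟩ := hlift a
  rw [pow_succ, hta, zero_mul, C_0, zero_dvd_iff, sub_eq_zero] at hdvd
  exact ⟨h, k, hh, hk, hhg, hkk, hdvd.symm⟩

end Hensel

theorem exists_monic_irreducible_span_eq {K : Type*} [Field K] (P : Ideal K[X]) [P.IsPrime]
    (hP : P ≠ ⊥) : ∃ g : K[X], g.Monic ∧ Irreducible g ∧ P = span {g} := by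
  classical
  set g₀ := Submodule.IsPrincipal.generator P
  have hg₀ : Prime g₀ := Submodule.IsPrincipal.prime_generator_of_isPrime P hP
  refine ⟨normalize g₀, monic_normalize hg₀.ne_zero,
    (normalize_associated g₀).symm.irreducible hg₀.irreducible, ?_⟩
  rw [span_singleton_eq_span_singleton.mpr (normalize_associated g₀),
    span_singleton_generator]

section ResidueField

variable {R K : Type*} [CommRing R] [Field K] {φ : R →+* K} {t : R}

theorem isMaximal_span_pair (hφ : Function.Surjective φ) (hker : RingHom.ker φ = span {t})
    {h : R[X]} (hirr : Irreducible (h.map φ)) : (span {h, C t}).IsMaximal := by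
  have := PrincipalIdealRing.isMaximal_of_irreducible hirr
  rw [← comap_span_map_eq_span_pair hφ hker]
  exact comap_isMaximal_of_surjective _ (map_surjective φ hφ)

theorem isPrimary_span_pair_pow (hφ : Function.Surjective φ) (hker : RingHom.ker φ = span {t})
    {h : R[X]} (hirr : Irreducible (h.map φ)) {i : ℕ} (hi : i ≠ 0) :
    (span {h, C (t ^ i)}).IsPrimary := by
  have hM := isMaximal_span_pair hφ hker hirr
  suffices hrad : (span {h, C (t ^ i)}).radical = span {h, C t} from
    isPrimary_of_isMaximal_radical (hrad ▸ hM)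
  have hx : h ∈ span {h, C (t ^ i)} := subset_span (Set.mem_insert _ _)
  have hs : C t ^ i ∈ span {h, C (t ^ i)} :=
    C_pow (a := t) (n := i) ▸ subset_span (Set.mem_insert_of_mem _ rfl)
  apply le_antisymm
  · rw [← hM.isPrime.radical]
    refine radical_mono (span_le.mpr ?_)
    rw [Set.insert_subset_iff, Set.singleton_subset_iff, C_pow]
    exact ⟨subset_span (Set.mem_insert _ _), Ideal.pow_mem_of_mem (span {h, C t})
      (subset_span (Set.mem_insert_of_mem _ rfl)) i (Nat.pos_of_ne_zero hi)⟩
  · rw [span_le, Set.insert_subset_iff, Set.singleton_subset_iff]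
    exact ⟨le_radical hx, ⟨i, hs⟩⟩

theorem exists_eq_span_pair_of_isPrimary (hφ : Function.Surjective φ)
    (hker : RingHom.ker φ = span {t}) {a : ℕ} (hta : t ^ a = 0) {f : R[X]} (hf : f.Monic)
    (hsep : (f.map φ).Separable) {I : Ideal R[X]} (hI : I.IsPrimary) (hfI : f ∈ I) :
    ∃ h : R[X], h.Monic ∧ h ∣ f ∧ Irreducible (h.map φ) ∧
      ∃ i, 1 ≤ i ∧ i ≤ a ∧ I = span {h, C (t ^ i)} := by
  have hta' : C t ^ a ∈ I := by rw [← C_pow, hta, C_0]; exact zero_mem I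
  have hker_le : RingHom.ker (mapRingHom φ) ≤ I.radical := by
    rw [ker_mapRingHom_eq_span_C hker, span_le, Set.singleton_subset_iff]
    exact ⟨a, hta'⟩
  have := isPrime_radical hI
  have := map_isPrime_of_surjective (map_surjective φ hφ) hker_le
  have hfP : f.map φ ∈ I.radical.map (mapRingHom φ) := mem_map_of_mem _ (le_radical hfI)
  obtain ⟨g, hg, hgirr, hPg⟩ := exists_monic_irreducible_span_eq (I.radical.map (mapRingHom φ))
    fun hbot ↦ (hf.map φ).ne_zero (by rwa [hbot, mem_bot] at hfP)
  obtain ⟨k₀, hk₀⟩ := mem_span_singleton.mp (hPg ▸ hfP)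
  have hco : IsCoprime g k₀ := (hk₀ ▸ hsep).isCoprime
  obtain ⟨h, k, hh, -, rfl, hkk, rfl⟩ := exists_monic_lift_of_isCoprime hφ hker ⟨a, hta⟩ hf
    hg (hg.of_mul_monic_left (hk₀ ▸ hf.map φ)) hk₀ hco
  have hrad : I.radical = span {h, C t} := by
    rw [← comap_span_map_eq_span_pair hφ hker, ← hPg,
      comap_map_of_surjective' _ (map_surjective φ hφ), sup_eq_left.mpr hker_le]
  have hk : k ∉ I.radical := by
    rw [hrad, ← comap_span_map_eq_span_pair hφ hker, mem_comap, coe_mapRingHom, hkk,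
      mem_span_singleton]
    exact fun hdvd ↦ hgirr.not_isUnit (hco.isUnit_of_dvd' dvd_rfl hdvd)
  have hhI : h ∈ I := ((isPrimary_iff.mp hI).2 hfI).resolve_right hk
  obtain ⟨i, hi1, hia, hIi⟩ := hI.eq_span_pair_pow hhI hrad.le hta'
  exact ⟨h, hh, dvd_mul_right h k, hgirr, i, hi1, hia, by rwa [C_pow]⟩

end ResidueField

end Polynomial

theorem stmt6_general (p : ℕ) [Fact p.Prime] (a n : ℕ) (ha : 0 < a) (hpn : ¬ p ∣ n)
    (Q : Ideal (Rquot p a n)) :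
    Q.IsPrimary ↔ ∃ h : Polynomial (ZMod (p ^ a)), BasicIrr p a n ha.ne' h ∧
      ∃ i : ℕ, 1 ≤ i ∧ i ≤ a ∧
        Q = Ideal.span {rmk p a n h, rmk p a n (C ((p : ZMod (p ^ a)) ^ i))} := by
  have : Fact (1 < p ^ a) := ⟨Nat.one_lt_pow ha.ne' (Fact.out : p.Prime).one_lt⟩
  set φ := ZMod.castHom (dvd_pow_self p ha.ne') (ZMod p)
  have hφ : Function.Surjective φ := ZMod.ringHom_surjective φ
  have hker : RingHom.ker φ = span {(p : ZMod (p ^ a))} := ZMod.ker_castHom _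
  have hpa : (p : ZMod (p ^ a)) ^ a = 0 := by rw [← Nat.cast_pow, ZMod.natCast_self]
  have hf : (X ^ n - 1 : (ZMod (p ^ a))[X]).Monic := by
    rw [← C_1]
    exact monic_X_pow_sub_C 1 fun hn ↦ hpn (hn ▸ dvd_zero p)
  have hsep : ((X ^ n - 1 : (ZMod (p ^ a))[X]).map φ).Separable := by
    rw [Polynomial.map_sub, Polynomial.map_pow, map_X, Polynomial.map_one,
      X_pow_sub_one_separable_iff, Ne, ZMod.natCast_eq_zero_iff]
    exact hpn
  constructor
  · intro hQ
    obtain ⟨h, hh, hdvd, hirr, i, hi1, hia, hI⟩ :=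
      exists_eq_span_pair_of_isPrimary hφ hker hpa hf hsep (hQ.comap (rmk p a n)) (by simp)
    refine ⟨h, ⟨hh, hdvd, hirr⟩, i, hi1, hia, ?_⟩
    rw [← map_comap_of_surjective _ Ideal.Quotient.mk_surjective Q, hI, Ideal.map_span,
      Set.image_pair]
  · rintro ⟨h, ⟨-, hdvd, hirr⟩, i, hi1, -, rfl⟩
    refine IsPrimary.of_comap_of_surjective Ideal.Quotient.mk_surjective ?_
    rw [← Set.image_pair, ← Ideal.map_span, comap_map_mk (span_le.mpr ?_)]
    · exact isPrimary_span_pair_pow hφ hker hirr (by omega)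
    · rw [Set.singleton_subset_iff]
      obtain ⟨k, hk⟩ := hdvd
      exact mem_span_pair.mpr ⟨k, 0, by rw [hk]; ring⟩

theorem stmt6 (p : ℕ) [Fact p.Prime] (a n : ℕ) (ha : 0 < a) (hn : 0 < n) (hpn : ¬ p ∣ n)
    (Q : Ideal (Rquot p a n)) :
    Q.IsPrimary ↔ ∃ h : Polynomial (ZMod (p ^ a)), BasicIrr p a n ha.ne' h ∧
      ∃ i : ℕ, 1 ≤ i ∧ i ≤ a ∧
        Q = Ideal.span {rmk p a n h, rmk p a n (C ((p : ZMod (p ^ a)) ^ i))} :=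
  stmt6_general p a n ha hpn Q
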